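/- arXiv:math/0309052 — 3 statements merged into one kernel-verified Lean document; each statement's English description precedes it below -/
import Mathlib

section
/- Let (G,E,ν) be a weighted graph with controlled weights which satisfies the elliptic Harnack inequality with constant C₁. Then there exist constants C and θ, depending only on C₁ and the controlled-weights constant p₀, such that |B(x₀,R)| ≤ C·R^{1+θ} for all x₀ ∈ G and all R ≥ 1. -/
/-!
Fix a nonnegative `h` harmonic on `B(x, ρ)` and `y` with `d(x, y) = ρ + 1`. Controlled weights
give `p₀ h(v) ≤ h(u)` across every edge at which `h` is harmonic, which settles `ρ ≤ 1`. For
`ρ ≥ 2` the EHI on `B(x, ⌊ρ/2⌋)` transfers the estimate from the point `w` of a geodesic with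
`d(x, w) = ⌊ρ/2⌋`, at the cost of `C₁ ≤ (4/3)^θ`, and `d(w, y) ≤ 3 (ρ + 1) / 4`; by induction
`p₀² h(y) ≤ (ρ + 1)^θ h(x)`.

The harmonic measures of the points of the sphere `S(x, ρ + 1)` seen from `x` exist (by the
maximum principle the Dirichlet problem on a finite set has at most one, hence exactly one,
solution) and sum to at most `1`, so `p₀² |S(x, r)| ≤ r^θ`; summing over `r ≤ R` bounds
`|B(x, R)|` by `(1 + p₀⁻²) R^{1+θ}`.
-/

structure WeightedGraph (V : Type) where
  Adj : V → V → Prop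
  symm : ∀ {x y}, Adj x y → Adj y x
  irrefl : ∀ x, ¬ Adj x x
  nbhd : V → Finset V
  mem_nbhd : ∀ x y, y ∈ nbhd x ↔ Adj x y
  conn : ∀ x y, Relation.ReflTransGen Adj x y
  ν : V → V → ℝ
  ν_symm : ∀ x y, ν x y = ν y x
  ν_nonneg : ∀ x y, 0 ≤ ν x y
  ν_pos_iff : ∀ x y, 0 < ν x y ↔ Adj x y

namespace WeightedGraph

variable {V : Type} (W : WeightedGraph V)

/-- The underlying simple graph. -/
def G : SimpleGraph V where
  Adj := W.Adj
  symm := ⟨fun _ _ h => W.symm h⟩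
  loopless := ⟨fun x h => W.irrefl x h⟩

/-- Graph distance. -/
noncomputable def dist (x y : V) : ℕ := W.G.dist x y

/-- Closed ball of integer radius. -/
noncomputable def ball (x : V) (R : ℕ) : Set V := {y | W.dist x y ≤ R}

/-- Closed ball of real radius. -/
noncomputable def rball (x : V) (ρ : ℝ) : Set V := {y | (W.dist x y : ℝ) ≤ ρ}

/-- Total weight at a vertex. -/
def mu (x : V) : ℝ := ∑ y ∈ W.nbhd x, W.ν x y

/-- The (unnormalized) Laplacian, `μ(x)·Δf(x)`. -/
def lap (h : V → ℝ) (x : V) : ℝ := ∑ y ∈ W.nbhd x, W.ν x y * (h y - h x)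

/-- `h` is harmonic on `A`. -/
def HarmOn (h : V → ℝ) (A : Set V) : Prop := ∀ x ∈ A, W.lap h x = 0

/-- Exterior boundary of a set. -/
def bdry (A : Set V) : Set V := {y | y ∉ A ∧ ∃ x ∈ A, W.Adj x y}

/-- Closure `A ∪ ∂A`. -/
def cl (A : Set V) : Set V := A ∪ W.bdry A

/-- Controlled weights with constant `p₀`. -/
def ControlledWeights (p₀ : ℝ) : Prop :=
  0 < p₀ ∧ ∀ x y, W.Adj x y → p₀ * W.mu x ≤ W.ν x y

/-- The elliptic Harnack inequality with constant `C₁`. -/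
def EHI (C₁ : ℝ) : Prop :=
  ∀ x : V, ∀ R : ℕ, 1 ≤ R → ∀ h : V → ℝ, (∀ v, 0 ≤ h v) →
    W.HarmOn h (W.ball x (2 * R)) →
    ∀ y ∈ W.ball x R, ∀ z ∈ W.ball x R, h y ≤ C₁ * h z

/-- `g` is the Green's function of the walk killed outside `D`, with pole `x₀`:
it is nonnegative, vanishes outside `D`, is harmonic on `D ∖ {x₀}` and
satisfies `μ(x₀)·Δg(x₀) = -1`. -/
def IsGreen (D : Set V) (x₀ : V) (g : V → ℝ) : Prop :=
  (∀ v, 0 ≤ g v) ∧ (∀ y, y ∉ D → g y = 0) ∧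
  (∀ x ∈ D, x ≠ x₀ → W.lap g x = 0) ∧ W.lap g x₀ = -1

end WeightedGraph

namespace SimpleGraph

variable {V : Type*} {G : SimpleGraph V}

lemma Reachable.exists_dist_eq_of_dist_eq_add {x y : V} (h : G.Reachable x y) {a b : ℕ}
    (hab : G.dist x y = a + b) : ∃ w, G.dist x w = a ∧ G.dist w y = b := by
  obtain ⟨p, hp⟩ := h.exists_walk_length_eq_dist
  have hx := dist_le (p.take a)
  have hy := dist_le (p.drop a)
  have hxy := (p.drop a).reachable.dist_triangle_right x
  simp only [Walk.take_length, Walk.drop_length] at hx hy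
  refine ⟨p.getVert a, ?_, ?_⟩ <;> omega

end SimpleGraph

lemma exists_pos_le_rpow {b : ℝ} (hb : 1 < b) (C : ℝ) : ∃ θ : ℝ, 0 < θ ∧ C ≤ b ^ θ := by
  obtain ⟨n, hn⟩ := pow_unbounded_of_one_lt C hb
  refine ⟨(n : ℝ) + 1, by positivity, ?_⟩
  calc C ≤ b ^ n := hn.le
    _ = b ^ (n : ℝ) := (Real.rpow_natCast b n).symm
    _ ≤ b ^ ((n : ℝ) + 1) := Real.rpow_le_rpow_of_exponent_le hb.le (by linarith)

namespace WeightedGraph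

variable {V : Type} (W : WeightedGraph V)

def sphere (x : V) (r : ℕ) : Set V := {y | W.dist x y = r}

section Metric

variable {W} {x y : V} {R : ℕ}

@[simp] lemma mem_ball : y ∈ W.ball x R ↔ W.dist x y ≤ R := Iff.rfl

@[simp] lemma mem_sphere : y ∈ W.sphere x R ↔ W.dist x y = R := Iff.rfl

variable (W) in
lemma reachable (x y : V) : W.G.Reachable x y :=
  (SimpleGraph.reachable_iff_reflTransGen x y).2 (W.conn x y)

variable (W) in
lemma dist_triangle (x y z : V) : W.dist x z ≤ W.dist x y + W.dist y z :=
  (W.reachable x y).dist_triangle_left z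

lemma adj_of_dist_eq_one (h : W.dist x y = 1) : W.Adj x y :=
  SimpleGraph.dist_eq_one_iff_adj.1 h

lemma exists_dist_eq_of_dist_eq_add {a b : ℕ} (h : W.dist x y = a + b) :
    ∃ w, W.dist x w = a ∧ W.dist w y = b :=
  (W.reachable x y).exists_dist_eq_of_dist_eq_add h

lemma ball_subset_ball {w : V} {r : ℕ} (h : W.dist x w + r ≤ R) : W.ball w r ⊆ W.ball x R :=
  fun v hv => by
    have := W.dist_triangle x w v
    simp only [mem_ball] at hv ⊢
    omega

lemma mem_ball_self : x ∈ W.ball x R := by simp [dist]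

variable (W) in
lemma ball_zero (x : V) : W.ball x 0 = {x} := by
  ext y
  simp [dist, (W.reachable x y).dist_eq_zero_iff, eq_comm]

variable (W) in
lemma ball_succ (x : V) (R : ℕ) : W.ball x (R + 1) = W.ball x R ∪ W.sphere x (R + 1) := by
  ext y
  simp only [mem_ball, mem_sphere, Set.mem_union]
  omega

variable (W) in
lemma finite_ball (x : V) (R : ℕ) : (W.ball x R).Finite := by
  induction R with
  | zero => simp [ball_zero]
  | succ R ih =>
    refine (ih.union (ih.biUnion fun u _ => (W.nbhd u).finite_toSet)).subset fun y hy => ?_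
    rcases (W.ball_succ x R ▸ hy) with hy | hy
    · exact Or.inl hy
    obtain ⟨u, hu, huy⟩ := exists_dist_eq_of_dist_eq_add hy
    exact Or.inr (Set.mem_biUnion hu.le ((W.mem_nbhd u y).2 (adj_of_dist_eq_one huy)))

variable (W) in
lemma finite_sphere (x : V) (R : ℕ) : (W.sphere x R).Finite :=
  (W.finite_ball x R).subset fun _ hy => hy.le

end Metric

section Harmonic

def laplacian : (V → ℝ) →ₗ[ℝ] V → ℝ where
  toFun := W.lap
  map_add' f g := by
    funext x
    simp only [lap, Pi.add_apply, ← Finset.sum_add_distrib]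
    exact Finset.sum_congr rfl fun _ _ => by ring
  map_smul' c f := by
    funext x
    simp only [lap, Pi.smul_apply, smul_eq_mul, RingHom.id_apply, Finset.mul_sum]
    exact Finset.sum_congr rfl fun _ _ => by ring

lemma laplacian_apply (h : V → ℝ) (x : V) : W.laplacian h x = W.lap h x := rfl

lemma lap_eq_sum_sub (h : V → ℝ) (x : V) :
    W.lap h x = ∑ y ∈ W.nbhd x, W.ν x y * h y - W.mu x * h x := by
  simp only [lap, mu, mul_sub, Finset.sum_sub_distrib, Finset.sum_mul]

variable {W} {D : Set V} {u : V → ℝ}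

lemma harmOn_const (D : Set V) (c : ℝ) : W.HarmOn (fun _ => c) D := fun x _ => by simp [lap]

lemma HarmOn.mono {D' : Set V} (hu : W.HarmOn u D) (h : D' ⊆ D) : W.HarmOn u D' :=
  fun x hx => hu x (h hx)

lemma HarmOn.neg (hu : W.HarmOn u D) : W.HarmOn (-u) D := fun x hx => by
  rw [← laplacian_apply, map_neg, Pi.neg_apply, laplacian_apply, hu x hx, neg_zero]

lemma HarmOn.sub {v : V → ℝ} (hu : W.HarmOn u D) (hv : W.HarmOn v D) : W.HarmOn (u - v) D :=
  fun x hx => by rw [← laplacian_apply, map_sub, Pi.sub_apply, laplacian_apply,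
    laplacian_apply, hu x hx, hv x hx, sub_zero]

lemma HarmOn.finset_sum {ι : Type*} {s : Finset ι} {f : ι → V → ℝ}
    (hf : ∀ i ∈ s, W.HarmOn (f i) D) : W.HarmOn (∑ i ∈ s, f i) D := fun x hx => by
  rw [← laplacian_apply, map_sum, Finset.sum_apply]
  exact Finset.sum_eq_zero fun i hi => hf i hi x hx

lemma eq_of_lap_eq_zero_of_forall_le {x y : V} (hlap : W.lap u x = 0)
    (hle : ∀ z ∈ W.nbhd x, u z ≤ u x) (hy : y ∈ W.nbhd x) : u y = u x := by
  have hterm := (Finset.sum_eq_zero_iff_of_nonpos fun z hz =>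
    mul_nonpos_of_nonneg_of_nonpos (W.ν_nonneg x z) (sub_nonpos.2 (hle z hz))).1 hlap y hy
  have hν : W.ν x y ≠ 0 := ((W.ν_pos_iff x y).2 ((W.mem_nbhd x y).1 hy)).ne'
  linarith [(mul_eq_zero.1 hterm).resolve_left hν]

lemma HarmOn.nonpos (hu : W.HarmOn u D) (hD : D.Finite) (hDc : ∃ v, v ∉ D)
    (hout : ∀ v ∉ D, u v ≤ 0) (v : V) : u v ≤ 0 := by
  by_contra! hv
  have hvD : v ∈ D := by_contra fun h => (hout v h).not_gt hv
  obtain ⟨a, haD, hmax⟩ := Set.exists_max_image D u hD ⟨v, hvD⟩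
  have hpos : 0 < u a := hv.trans_le (hmax v hvD)
  have hle : ∀ z, u z ≤ u a := fun z => by
    by_cases hz : z ∈ D
    exacts [hmax z hz, (hout z hz).trans hpos.le]
  -- A positive maximum spreads along edges, so it would reach the complement of `D`.
  have hspread : ∀ c, Relation.ReflTransGen W.Adj a c → c ∈ D ∧ u c = u a := by
    intro c hc
    induction hc with
    | refl => exact ⟨haD, rfl⟩
    | tail _ hbc ih =>
      obtain ⟨hbD, hba⟩ := ih
      have hc := eq_of_lap_eq_zero_of_forall_le (hu _ hbD) (fun z _ => hba ▸ hle z)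
        ((W.mem_nbhd _ _).2 hbc)
      rw [hba] at hc
      exact ⟨by_contra fun h => (hout _ h).not_gt (hc ▸ hpos), hc⟩
  obtain ⟨w, hw⟩ := hDc
  exact hw (hspread w (W.conn a w)).1

lemma HarmOn.nonneg (hu : W.HarmOn u D) (hD : D.Finite) (hDc : ∃ v, v ∉ D)
    (hout : ∀ v ∉ D, 0 ≤ u v) (v : V) : 0 ≤ u v :=
  neg_nonpos.1 (hu.neg.nonpos hD hDc (fun w hw => neg_nonpos.2 (hout w hw)) v)

lemma HarmOn.eq_zero (hu : W.HarmOn u D) (hD : D.Finite) (hDc : ∃ v, v ∉ D)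
    (hout : ∀ v ∉ D, u v = 0) : u = 0 :=
  funext fun v => le_antisymm (hu.nonpos hD hDc (fun w hw => (hout w hw).le) v)
    (hu.nonneg hD hDc (fun w hw => (hout w hw).ge) v)

variable (W) in
theorem exists_harmOn_eqOn_compl (hD : D.Finite) (hDc : ∃ v, v ∉ D) (f : V → ℝ) :
    ∃ H : V → ℝ, (∀ v ∉ D, H v = f v) ∧ W.HarmOn H D := by
  classical
  have := hD.to_subtype
  set ext := Function.ExtendByZero.linearMap ℝ (Subtype.val : D → V)
  set res := LinearMap.funLeft ℝ ℝ (Subtype.val : D → V)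
  have hext_out : ∀ u, ∀ v ∉ D, ext u v = 0 := fun u v hv =>
    Function.extend_apply' _ _ _ fun ⟨w, hw⟩ => hv (hw ▸ w.2)
  have hext_in : ∀ u (w : D), ext u w = u w := fun u w =>
    Subtype.val_injective.extend_apply _ _ w
  -- Uniqueness for the homogeneous problem makes `res ∘ Δ ∘ ext` injective, hence surjective.
  have hinj : Function.Injective (res ∘ₗ W.laplacian ∘ₗ ext) := by
    refine (injective_iff_map_eq_zero _).2 fun u hu => funext fun w => ?_
    have hharm : W.HarmOn (ext u) D := fun x hx => congrFun hu ⟨x, hx⟩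
    simpa [hext_in] using congrFun (hharm.eq_zero hD hDc (hext_out u)) w
  set g : V → ℝ := fun v => if v ∈ D then 0 else f v
  obtain ⟨u, hu⟩ := LinearMap.injective_iff_surjective.1 hinj (-res (W.laplacian g))
  refine ⟨ext u + g, fun v hv => by simp [hext_out u v hv, g, hv], fun x hx => ?_⟩
  have := congrFun hu ⟨x, hx⟩
  simp only [LinearMap.comp_apply, LinearMap.funLeft_apply, Pi.neg_apply, res] at this
  rw [← laplacian_apply, map_add, Pi.add_apply, this, neg_add_cancel]

end Harmonic

section Growth

variable {W} {p₀ C₁ θ : ℝ}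

lemma ControlledWeights.le_one (hcw : W.ControlledWeights p₀) {x y : V} (hxy : W.Adj x y) :
    p₀ ≤ 1 := by
  have hν : W.ν x y ≤ W.mu x :=
    Finset.single_le_sum (fun z _ => W.ν_nonneg x z) ((W.mem_nbhd x y).2 hxy)
  have hμ : 0 < W.mu x := ((W.ν_pos_iff x y).2 hxy).trans_le hν
  exact (mul_le_iff_le_one_left hμ).1 ((hcw.2 x y hxy).trans hν)

lemma ControlledWeights.mul_le_of_adj (hcw : W.ControlledWeights p₀) {D : Set V} {H : V → ℝ}
    (hH : ∀ v, 0 ≤ H v) (hharm : W.HarmOn H D) {x y : V} (hx : x ∈ D) (hxy : W.Adj x y) :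
    p₀ * H y ≤ H x := by
  have hy : y ∈ W.nbhd x := (W.mem_nbhd x y).2 hxy
  have hmean : W.mu x * H x = ∑ z ∈ W.nbhd x, W.ν x z * H z := by
    linarith [W.lap_eq_sum_sub H x, hharm x hx]
  have hμ : 0 < W.mu x :=
    ((W.ν_pos_iff x y).2 hxy).trans_le (Finset.single_le_sum (fun z _ => W.ν_nonneg x z) hy)
  refine le_of_mul_le_mul_left ?_ hμ
  calc W.mu x * (p₀ * H y) = p₀ * W.mu x * H y := by ring
    _ ≤ W.ν x y * H y := mul_le_mul_of_nonneg_right (hcw.2 x y hxy) (hH y)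
    _ ≤ ∑ z ∈ W.nbhd x, W.ν x z * H z :=
      Finset.single_le_sum (fun z _ => mul_nonneg (W.ν_nonneg x z) (hH z)) hy
    _ = W.mu x * H x := hmean.symm

theorem HarmOn.sq_mul_le_rpow_mul (hcw : W.ControlledWeights p₀) (hehi : W.EHI C₁)
    (hθ : 0 ≤ θ) (hC₁ : C₁ ≤ (4 / 3 : ℝ) ^ θ) {H : V → ℝ} (hH : ∀ v, 0 ≤ H v) (ρ : ℕ)
    {x y : V} (hharm : W.HarmOn H (W.ball x ρ)) (hxy : W.dist x y = ρ + 1) :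
    p₀ ^ 2 * H y ≤ ((ρ : ℝ) + 1) ^ θ * H x := by
  induction ρ using Nat.strong_induction_on generalizing x with
  | _ ρ ih =>
  have hp₀ := hcw.1
  rcases (by omega : ρ = 0 ∨ ρ = 1 ∨ 2 ≤ ρ) with rfl | rfl | hρ
  · have hadj := adj_of_dist_eq_one hxy
    calc p₀ ^ 2 * H y ≤ p₀ * H y := by
          gcongr
          · exact hH y
          · exact pow_le_of_le_one hp₀.le (hcw.le_one hadj) two_ne_zero
      _ ≤ H x := hcw.mul_le_of_adj hH hharm mem_ball_self hadj
      _ = ((0 : ℕ) + 1 : ℝ) ^ θ * H x := by simp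
  · obtain ⟨w, hxw, hwy⟩ := exists_dist_eq_of_dist_eq_add (a := 1) (b := 1) hxy
    calc p₀ ^ 2 * H y = p₀ * (p₀ * H y) := by ring
      _ ≤ p₀ * H w := by
          gcongr
          exact hcw.mul_le_of_adj hH hharm hxw.le (adj_of_dist_eq_one hwy)
      _ ≤ H x := hcw.mul_le_of_adj hH hharm mem_ball_self (adj_of_dist_eq_one hxw)
      _ ≤ ((1 : ℕ) + 1 : ℝ) ^ θ * H x :=
          le_mul_of_one_le_left (hH x) (Real.one_le_rpow (by norm_num) hθ)
  set s := ρ / 2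
  obtain ⟨w, hxw, hwy⟩ :=
    exists_dist_eq_of_dist_eq_add (hxy.trans (by omega : ρ + 1 = s + (ρ - s + 1)))
  have hball_w : W.ball w (ρ - s) ⊆ W.ball x ρ := ball_subset_ball (by omega)
  have hball_x : W.ball x (2 * s) ⊆ W.ball x ρ := ball_subset_ball (by simp [dist]; omega)
  have hfar : p₀ ^ 2 * H y ≤ ((ρ - s : ℕ) + 1 : ℝ) ^ θ * H w :=
    ih (ρ - s) (by omega) (hharm.mono hball_w) hwy
  have hnear : H w ≤ C₁ * H x :=
    hehi x s (by omega) H hH (hharm.mono hball_x) w hxw.le x mem_ball_self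
  have hshrink : (4 / 3 : ℝ) * ((ρ - s : ℕ) + 1) ≤ ρ + 1 := by
    have : 4 * (ρ - s + 1) ≤ 3 * (ρ + 1) := by omega
    have : ((4 * (ρ - s + 1) : ℕ) : ℝ) ≤ ((3 * (ρ + 1) : ℕ) : ℝ) := by exact_mod_cast this
    push_cast at this
    linarith
  calc p₀ ^ 2 * H y ≤ ((ρ - s : ℕ) + 1 : ℝ) ^ θ * (C₁ * H x) := by
        refine hfar.trans ?_
        gcongr
    _ ≤ ((ρ - s : ℕ) + 1 : ℝ) ^ θ * ((4 / 3 : ℝ) ^ θ * H x) := by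
        gcongr
        exact hH x
    _ = ((4 / 3 : ℝ) * ((ρ - s : ℕ) + 1)) ^ θ * H x := by
        rw [Real.mul_rpow (by norm_num) (by positivity)]
        ring
    _ ≤ ((ρ : ℝ) + 1) ^ θ * H x := by
        gcongr
        exact hH x

theorem sq_mul_ncard_sphere_le (hcw : W.ControlledWeights p₀) (hehi : W.EHI C₁) (hθ : 0 ≤ θ)
    (hC₁ : C₁ ≤ (4 / 3 : ℝ) ^ θ) (x : V) (ρ : ℕ) :
    p₀ ^ 2 * (W.sphere x (ρ + 1)).ncard ≤ ((ρ : ℝ) + 1) ^ θ := by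
  classical
  set S := (W.finite_sphere x (ρ + 1)).toFinset
  rcases S.eq_empty_or_nonempty with hS | ⟨y₀, hy₀⟩
  · simp [Set.ncard_eq_toFinset_card _ (W.finite_sphere x (ρ + 1)), S, hS]
    positivity
  have hD := W.finite_ball x ρ
  have hout : ∀ y ∈ S, y ∉ W.ball x ρ := fun y hy => by
    simp only [S, Set.Finite.mem_toFinset, mem_sphere] at hy
    simp [hy]
  have hDc : ∃ v, v ∉ W.ball x ρ := ⟨y₀, hout y₀ hy₀⟩
  choose H hH_out hH_harm using fun y : V => W.exists_harmOn_eqOn_compl hD hDc (Pi.single y 1)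
  have hH_nonneg : ∀ y v, 0 ≤ H y v := fun y =>
    (hH_harm y).nonneg hD hDc fun v hv => by
      rw [hH_out y v hv]
      by_cases hvy : v = y <;> simp [hvy]
  have hlower : ∀ y ∈ S, p₀ ^ 2 ≤ ((ρ : ℝ) + 1) ^ θ * H y x := fun y hy => by
    have hy' : W.dist x y = ρ + 1 := by simpa [S] using hy
    simpa [hH_out y y (hout y hy)] using
      (hH_harm y).sq_mul_le_rpow_mul hcw hehi hθ hC₁ (hH_nonneg y) ρ hy'
  have hsum : ∑ y ∈ S, H y x ≤ 1 := by
    have hharm := (HarmOn.finset_sum (s := S) fun y _ => hH_harm y).sub (harmOn_const _ 1)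
    have := hharm.nonpos hD hDc (fun v hv => by
      simp only [Pi.sub_apply, Finset.sum_apply, hH_out _ v hv, Finset.sum_pi_single]
      split_ifs <;> norm_num) x
    simpa [Finset.sum_apply] using this
  calc p₀ ^ 2 * (W.sphere x (ρ + 1)).ncard = ∑ y ∈ S, p₀ ^ 2 := by
        rw [Set.ncard_eq_toFinset_card _ (W.finite_sphere x (ρ + 1)), Finset.sum_const,
          nsmul_eq_mul, mul_comm]
    _ ≤ ∑ y ∈ S, ((ρ : ℝ) + 1) ^ θ * H y x := Finset.sum_le_sum hlower
    _ = ((ρ : ℝ) + 1) ^ θ * ∑ y ∈ S, H y x := (Finset.mul_sum ..).symm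
    _ ≤ ((ρ : ℝ) + 1) ^ θ := mul_le_of_le_one_right (by positivity) hsum

theorem sq_mul_ncard_ball_le (hcw : W.ControlledWeights p₀) (hehi : W.EHI C₁) (hθ : 0 ≤ θ)
    (hC₁ : C₁ ≤ (4 / 3 : ℝ) ^ θ) (x : V) (R : ℕ) :
    p₀ ^ 2 * (W.ball x R).ncard ≤ p₀ ^ 2 + R * (R : ℝ) ^ θ := by
  induction R with
  | zero => simp [ball_zero]
  | succ R ih =>
    have hdisj : Disjoint (W.ball x R) (W.sphere x (R + 1)) :=
      Set.disjoint_left.2 fun y hy hy' => by simp_all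
    have hsphere := sq_mul_ncard_sphere_le hcw hehi hθ hC₁ x R
    have hmono : (R : ℝ) ^ θ ≤ ((R : ℝ) + 1) ^ θ := by gcongr; linarith
    rw [ball_succ, Set.ncard_union_eq hdisj (W.finite_ball x R) (W.finite_sphere x (R + 1))]
    push_cast at ih ⊢
    nlinarith [Nat.cast_nonneg (α := ℝ) R]

end Growth

end WeightedGraph

/-- **Theorem 1.** If a weighted graph with controlled weights (constant `p₀`)
satisfies the EHI with constant `C₁`, then there are constants `C`, `θ`,
depending only on `C₁` and `p₀`, such that `|B(x₀,R)| ≤ C·R^{1+θ}` for all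
`x₀` and all `R ≥ 1`. -/
theorem ehi_implies_polynomial_growth (C₁ p₀ : ℝ) :
    ∃ C θ : ℝ, 0 < C ∧ 0 < θ ∧
      ∀ (V : Type) (W : WeightedGraph V),
        W.ControlledWeights p₀ → W.EHI C₁ →
        ∀ x₀ : V, ∀ R : ℕ, 1 ≤ R →
          ((W.ball x₀ R).ncard : ℝ) ≤ C * (R : ℝ) ^ ((1 : ℝ) + θ) := by
  obtain ⟨θ, hθ, hC₁⟩ := exists_pos_le_rpow (by norm_num : (1 : ℝ) < 4 / 3) C₁
  refine ⟨1 + (p₀ ^ 2)⁻¹, θ, by positivity, hθ, fun V W hcw hehi x₀ R hR => ?_⟩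
  have hp₀ : 0 < p₀ ^ 2 := pow_pos hcw.1 2
  have hball := W.sq_mul_ncard_ball_le hcw hehi hθ.le hC₁ x₀ R
  have hR₁ : (1 : ℝ) ≤ R := by exact_mod_cast hR
  have hRθ : (1 : ℝ) ≤ R * (R : ℝ) ^ θ :=
    one_le_mul_of_one_le_of_one_le hR₁ (Real.one_le_rpow hR₁ hθ.le)
  rw [Real.rpow_add (by positivity), Real.rpow_one]
  calc ((W.ball x₀ R).ncard : ℝ) ≤ 1 + (p₀ ^ 2)⁻¹ * (R * (R : ℝ) ^ θ) := by
        rw [← mul_le_mul_iff_right₀ hp₀, mul_add, mul_inv_cancel_left₀ hp₀.ne', mul_one]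
        exact hball
    _ ≤ (1 + (p₀ ^ 2)⁻¹) * (R * (R : ℝ) ^ θ) := by
        rw [add_mul, one_mul]
        gcongr
end

section
/- Uniform coupling implies the oscillation inequality: if a weighted graph satisfies uniform co-adapted coupling UC(K) with success probability p₁ > 0, then it satisfies OI(K) with ρ = 1 − p₁; that is, for every x₀ ∈ G, R ≥ 1, and every bounded function h harmonic on B(x₀,KR), Osc(h, B(x₀,R)) ≤ (1−p₁) · Osc(h, B̄(x₀,KR)). -/
/-- The joint law at the stopping time `T = τ_C ∧ τ_E` of a co-adapted coupling
of two continuous-time simple random walks started at `y₁`, `y₂` and stopped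
upon meeting or upon leaving `B`: a sub-coupling measure `π` on pairs of
points of `B̄`, with total mass one, whose marginals integrate every function
harmonic on `B` to its initial value (optional stopping). -/
structure StoppedCoupling {V : Type} (W : WeightedGraph V) (B : Set V)
    (y₁ y₂ : V) where
  π : V × V → ℝ
  nonneg : ∀ a, 0 ≤ π a
  mem_supp : ∀ a : V × V, π a ≠ 0 → a.1 ∈ W.cl B ∧ a.2 ∈ W.cl B
  total : ∑' a : V × V, π a = 1
  mean_fst : ∀ h : V → ℝ, W.HarmOn h B → ∑' a : V × V, π a * h a.1 = h y₁
  mean_snd : ∀ h : V → ℝ, W.HarmOn h B → ∑' a : V × V, π a * h a.2 = h y₂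

/-!
Optional stopping for the stopped coupling `π` gives `h y₁ - h y₂ = ∑ π(a) (h a₁ - h a₂)`.
The summand vanishes on the diagonal, where the walks have met, and is at most
`π(a) · Osc(h, B̄)` off it, so the difference is at most the oscillation times
`1 - ∑ π(v, v) < 1 - p₁`.
-/

section CouplingSums

variable {α β : Type*}

theorem tsum_indicator_diagonal {E : Type*} [AddCommMonoid E] [TopologicalSpace E]
    (π : α × α → E) : ∑' a, (Set.diagonal α).indicator π a = ∑' v, π (v, v) := by
  rw [← Function.diag_injective.tsum_eq (Set.range_diag ▸ Set.support_indicator_subset)]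
  simp [Function.diag]

theorem summable_of_tsum_eq_one {π : β → ℝ} (hπ : ∑' a, π a = 1) : Summable π := by
  by_contra hns
  simp [tsum_eq_zero_of_not_summable hns] at hπ

theorem Summable.mul_of_abs_le_on_support {π g : β → ℝ} {C : ℝ} (hπ : Summable π)
    (hg : ∀ a, π a ≠ 0 → |g a| ≤ C) : Summable fun a => π a * g a := by
  refine Summable.of_norm_bounded (hπ.abs.mul_right C) fun a => ?_
  by_cases hz : π a = 0
  · simp [hz]
  · rw [Real.norm_eq_abs, abs_mul]
    exact mul_le_mul_of_nonneg_left (hg a hz) (abs_nonneg _)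

theorem tsum_mul_fst_sub_tsum_mul_snd_le {π : α × α → ℝ} {f : α → ℝ} {S : Set α} {m M : ℝ}
    (hπ₀ : ∀ a, 0 ≤ π a) (hπ₁ : ∑' a, π a = 1) (hsupp : ∀ a, π a ≠ 0 → a.1 ∈ S ∧ a.2 ∈ S)
    (hf : ∀ v ∈ S, m ≤ f v ∧ f v ≤ M) :
    ∑' a, π a * f a.1 - ∑' a, π a * f a.2 ≤ (M - m) * (1 - ∑' v, π (v, v)) := by
  have hπ := summable_of_tsum_eq_one hπ₁
  have habs : ∀ v ∈ S, |f v| ≤ max |m| |M| := fun v hv =>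
    abs_le_max_abs_abs (hf v hv).1 (hf v hv).2
  have h₁ : Summable fun a => π a * f a.1 :=
    hπ.mul_of_abs_le_on_support fun a ha => habs _ (hsupp a ha).1
  have h₂ : Summable fun a => π a * f a.2 :=
    hπ.mul_of_abs_le_on_support fun a ha => habs _ (hsupp a ha).2
  have hdiag := hπ.indicator (Set.diagonal α)
  have hterm : ∀ a,
      π a * f a.1 - π a * f a.2 ≤ (M - m) * (π a - (Set.diagonal α).indicator π a) := by
    intro a
    by_cases hd : a ∈ Set.diagonal α
    · rw [Set.indicator_of_mem hd, Set.mem_diagonal_iff.mp hd]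
      simp
    rw [Set.indicator_of_notMem hd, sub_zero, ← mul_sub, mul_comm (M - m)]
    by_cases hz : π a = 0
    · simp [hz]
    obtain ⟨h1, h2⟩ := hsupp a hz
    exact mul_le_mul_of_nonneg_left (by linarith [hf _ h1, hf _ h2]) (hπ₀ a)
  calc ∑' a, π a * f a.1 - ∑' a, π a * f a.2 = ∑' a, (π a * f a.1 - π a * f a.2) :=
        (h₁.tsum_sub h₂).symm
    _ ≤ ∑' a, (M - m) * (π a - (Set.diagonal α).indicator π a) :=
        (h₁.sub h₂).tsum_le_tsum hterm ((hπ.sub hdiag).mul_left _)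
    _ = (M - m) * (1 - ∑' v, π (v, v)) := by
        rw [tsum_mul_left, hπ.tsum_sub hdiag, hπ₁, tsum_indicator_diagonal]

end CouplingSums

namespace StoppedCoupling

variable {V : Type} {W : WeightedGraph V} {B : Set V} {y₁ y₂ : V}

theorem cl_nonempty (sc : StoppedCoupling W B y₁ y₂) : (W.cl B).Nonempty := by
  by_contra hB
  have hzero : ∀ a, sc.π a = 0 := fun a => by_contra fun ha => hB ⟨_, (sc.mem_supp a ha).1⟩
  simpa [hzero] using sc.total

theorem sub_le (sc : StoppedCoupling W B y₁ y₂) {h : V → ℝ} (hh : W.HarmOn h B) {m M : ℝ}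
    (hb : ∀ v ∈ W.cl B, m ≤ h v ∧ h v ≤ M) :
    h y₁ - h y₂ ≤ (M - m) * (1 - ∑' v, sc.π (v, v)) := by
  rw [← sc.mean_fst h hh, ← sc.mean_snd h hh]
  exact tsum_mul_fst_sub_tsum_mul_snd_le sc.nonneg sc.total sc.mem_supp hb

end StoppedCoupling

theorem uniform_coupling_implies_oscillation_inequality_general
    {V : Type} (W : WeightedGraph V) (K p₁ : ℝ)
    (hUC : ∀ x₀ : V, ∀ R : ℕ, 1 ≤ R →
      ∀ y₁ ∈ W.ball x₀ R, ∀ y₂ ∈ W.ball x₀ R,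
        ∃ sc : StoppedCoupling W (W.rball x₀ (K * R)) y₁ y₂,
          p₁ < ∑' v : V, sc.π (v, v)) :
    ∀ x₀ : V, ∀ R : ℕ, 1 ≤ R →
      ∀ h : V → ℝ, W.HarmOn h (W.rball x₀ (K * R)) →
      ∀ m M : ℝ, (∀ v ∈ W.cl (W.rball x₀ (K * R)), m ≤ h v ∧ h v ≤ M) →
      ∀ y₁ ∈ W.ball x₀ R, ∀ y₂ ∈ W.ball x₀ R,
        h y₁ - h y₂ ≤ (1 - p₁) * (M - m) := by
  intro x₀ R hR h hh m M hb y₁ hy₁ y₂ hy₂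
  obtain ⟨sc, hmeet⟩ := hUC x₀ R hR y₁ hy₁ y₂ hy₂
  obtain ⟨v, hv⟩ := sc.cl_nonempty
  have hmM : m ≤ M := (hb v hv).1.trans (hb v hv).2
  calc h y₁ - h y₂ ≤ (M - m) * (1 - ∑' v, sc.π (v, v)) := sc.sub_le hh hb
    _ ≤ (1 - p₁) * (M - m) := by
        rw [mul_comm]
        exact mul_le_mul_of_nonneg_right (by linarith) (sub_nonneg.mpr hmM)

/-- **Uniform coupling implies the oscillation inequality OI(K) with
`ρ = 1 − p₁`.**  If for all `x₀`, `R ≥ 1` and `y₁, y₂ ∈ B(x₀,R)` the walks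
can be coupled so that they meet before exiting `B(x₀,KR)` with probability
`> p₁` (the event `τ_C < τ_E` is contained in the event that the stopped
positions agree), then for every `h` harmonic and bounded on `B(x₀,KR)`,
`Osc(h, B(x₀,R)) ≤ (1−p₁)·Osc(h, B̄(x₀,KR))`. -/
theorem uniform_coupling_implies_oscillation_inequality
    {V : Type} (W : WeightedGraph V) (K p₁ : ℝ) (hK : 1 < K) (hp₁ : 0 < p₁)
    (hUC : ∀ x₀ : V, ∀ R : ℕ, 1 ≤ R →
      ∀ y₁ ∈ W.ball x₀ R, ∀ y₂ ∈ W.ball x₀ R,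
        ∃ sc : StoppedCoupling W (W.rball x₀ (K * R)) y₁ y₂,
          p₁ < ∑' v : V, sc.π (v, v)) :
    ∀ x₀ : V, ∀ R : ℕ, 1 ≤ R →
      ∀ h : V → ℝ, W.HarmOn h (W.rball x₀ (K * R)) →
      ∀ m M : ℝ, (∀ v ∈ W.cl (W.rball x₀ (K * R)), m ≤ h v ∧ h v ≤ M) →
      ∀ y₁ ∈ W.ball x₀ R, ∀ y₂ ∈ W.ball x₀ R,
        h y₁ - h y₂ ≤ (1 - p₁) * (M - m) :=
  uniform_coupling_implies_oscillation_inequality_general W K p₁ hUC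
end

section
/- On the lamplighter graph, started from y₁ = (−R, 1_{[−R,0]}), the probability that the random walk exits B(x₀,KR) (K < 3, δ = (3−K)/3, λ = 1−δ) at a point whose lit-lamp set meets [λR, R] is at most 2^{−δR}. Indeed, on the event of exiting through position λR before reaching −3R, every lamp in [−R, −λR) must have been switched off, which has probability at most 2^{−δR}. -/
/-- A lamp configuration: a finitely supported `{0,1}`-valued sequence on `ℤ`. -/
def Conf : Type := {ξ : ℤ →₀ ℕ // ∀ i, ξ i ≤ 1}

/-- Vertices of the lamplighter graph: lamplighter position together with a
lamp configuration. -/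
def LV : Type := ℤ × Conf

/-- Change the lamp at site `i` to the value `k ∈ {0,1}`. -/
noncomputable def confSet (ξ : Conf) (i : ℤ) (k : ℕ) (hk : k ≤ 1) : Conf :=
  ⟨Finsupp.update ξ.1 i k, by
    intro j
    rcases eq_or_ne j i with rfl | hj
    · simpa using hk
    · simpa [Finsupp.coe_update, Function.update, hj] using ξ.2 j⟩

/-- `y` is obtained from `x` by switching (or not) the lamp at the current
position of the lamplighter and then moving one step ("switch then walk"). -/
def lampRel (x y : LV) : Prop :=
  (y.1 = x.1 + 1 ∨ y.1 = x.1 - 1) ∧ ∀ i, i ≠ x.1 → y.2.1 i = x.2.1 i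

/-- The lamplighter graph. -/
def lampGraph : SimpleGraph LV where
  Adj x y := lampRel x y ∨ lampRel y x
  symm := by constructor; intro x y h; tauto
  loopless := by
    constructor
    intro x h
    rcases h with ⟨h1, -⟩ | ⟨h1, -⟩ <;> rcases h1 with h | h <;> omega

/-- Graph distance on the lamplighter graph. -/
noncomputable def lampDist (x y : LV) : ℕ := lampGraph.dist x y

/-- Closed ball of integer radius. -/
noncomputable def lampBall (x : LV) (R : ℕ) : Set LV := {y | lampDist x y ≤ R}

/-- Closed ball of real radius. -/
noncomputable def lampRBall (x : LV) (ρ : ℝ) : Set LV :=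
  {y | (lampDist x y : ℝ) ≤ ρ}

/-- A set together with its exterior boundary. -/
def lampCl (A : Set LV) : Set LV :=
  A ∪ {y | y ∉ A ∧ ∃ x ∈ A, lampGraph.Adj x y}

/-- The configuration with all lamps off. -/
def lampZero : Conf := ⟨0, by intro i; simp⟩

/-- The base point: lamplighter at the origin, all lamps off. -/
def lampBase : LV := ((0 : ℤ), lampZero)

/-- The configuration `1_{[a,b]}`. -/
noncomputable def lampIcc (a b : ℤ) : Conf :=
  ⟨Finsupp.indicator (Finset.Icc a b) (fun _ _ => 1), by
    intro i
    classical
    by_cases h : i ∈ Finset.Icc a b <;> simp [Finsupp.indicator_apply, h]⟩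

/-- `h` is harmonic at `x` for the simple random walk on the lamplighter
graph: `h(x)` is the average of `h` over the four neighbours of `x`. -/
def harmAt (h : LV → ℝ) (x : LV) : Prop :=
  4 * h x =
    h (x.1 + 1, confSet x.2 x.1 0 (by norm_num)) +
    h (x.1 + 1, confSet x.2 x.1 1 le_rfl) +
    h (x.1 - 1, confSet x.2 x.1 0 (by norm_num)) +
    h (x.1 - 1, confSet x.2 x.1 1 le_rfl)


/-- The four (equally likely) successors of a state of the discrete-time
simple random walk on the lamplighter graph. -/
noncomputable def lampSuccs (x : LV) : List LV :=
  [(x.1 + 1, confSet x.2 x.1 0 (by norm_num)),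
   (x.1 + 1, confSet x.2 x.1 1 le_rfl),
   (x.1 - 1, confSet x.2 x.1 0 (by norm_num)),
   (x.1 - 1, confSet x.2 x.1 1 le_rfl)]

/-- One step of the walk. -/
noncomputable def lampStep (x y : LV) : Prop := y ∈ lampSuccs x

/-- The probability of a finite trajectory: each of the four successors is
chosen with probability `1/4`, and the four successors of a state are
pairwise distinct. -/
noncomputable def lampTrajWeight (l : List LV) : ℝ := (1 / 4 : ℝ) ^ (l.length - 1)

/-- `l` is a trajectory of the walk starting at `y`, staying in `B` until its
final state, which is the first state outside `B` and lies in `S`. -/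
noncomputable def lampIsExitPath (B S : Set LV) (y : LV) (l : List LV) : Prop :=
  l.head? = some y ∧ l.Chain' lampStep ∧ (∀ v ∈ l.dropLast, v ∈ B) ∧
    ∃ z, l.getLast? = some z ∧ z ∉ B ∧ z ∈ S

/-- `P^y(X_τ ∈ S)` where `τ` is the exit time of `B`: the total probability of
all trajectories from `y` exiting `B` through a state in `S`. -/
noncomputable def lampExitProb (B S : Set LV) (y : LV) : ℝ :=
  ∑' l : {l : List LV // lampIsExitPath B S y l}, lampTrajWeight l.1


/-!
Drive the walk by independent fair coins `ω t = (direction, new state of the lamp left behind)`.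
An exit path with `τ` steps is then the event that `ω` begins with a fixed word of length `τ`,
of probability `4 ^ (-τ)`, and distinct exit paths give disjoint events, so it suffices to count
coin sequences of a fixed length.

Put `ρ = λR`. If the walk leaves `B(x₀, 3ρ)` with a lit lamp at some `i ≥ ρ`, it has visited `i`,
so it has reached `m = ⌈ρ⌉` at a time `T` before leaving the ball. A lamp lit at `j < -ρ` at time
`T` would give `d(x₀, X_T) ≥ |j| + |m - j| > 3ρ`, so every lamp of `J = [-R, -ρ)`, lit at the
start, was switched off when the walk left it for the last time before `T`. These last-visit
times are `#J` distinct times determined by the directions alone, so the corresponding lamp coins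
are all `false` with probability `2 ^ (-#J) ≤ 2 ^ (-δR)`.
-/

open Finset Fin.NatCast

namespace Lamplighter

theorem conf_ext {ξ η : Conf} (h : ∀ i, ξ.1 i = η.1 i) : ξ = η :=
  Subtype.ext (Finsupp.ext h)

theorem confSet_apply_self (ξ : Conf) (i : ℤ) (k : ℕ) (hk : k ≤ 1) :
    (confSet ξ i k hk).1 i = k := by
  simp [confSet]

theorem confSet_apply_of_ne (ξ : Conf) {i j : ℤ} (k : ℕ) (hk : k ≤ 1) (h : j ≠ i) :
    (confSet ξ i k hk).1 j = ξ.1 j := by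
  simp [confSet, h]

theorem lampIcc_apply (a b i : ℤ) :
    (lampIcc a b).1 i = if a ≤ i ∧ i ≤ b then 1 else 0 := by
  classical
  simp [lampIcc, Finsupp.indicator_apply]

/-! ### Distances in the lamplighter graph -/

theorem fst_eq_of_adj {x y : LV} (h : lampGraph.Adj x y) :
    y.1 = x.1 + 1 ∨ y.1 = x.1 - 1 := by
  rcases h with ⟨h, -⟩ | ⟨h, -⟩ <;> omega

theorem lamp_eq_of_adj {x y : LV} (h : lampGraph.Adj x y) {s : ℤ} (hx : s ≠ x.1)
    (hy : s ≠ y.1) : y.2.1 s = x.2.1 s := by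
  rcases h with ⟨-, h⟩ | ⟨-, h⟩
  exacts [h s hx, (h s hy).symm]

theorem abs_fst_sub_le_length {u v : LV} (W : lampGraph.Walk u v) :
    |v.1 - u.1| ≤ W.length := by
  induction W with
  | nil => simp
  | cons h _ ih =>
    rw [SimpleGraph.Walk.length_cons, abs_le] at *
    have := fst_eq_of_adj h
    push_cast
    omega

theorem exists_mem_support_fst_eq {u v : LV} (W : lampGraph.Walk u v) {s : ℤ}
    (h : v.2.1 s ≠ u.2.1 s) : ∃ z ∈ W.support, z.1 = s := by
  induction W with
  | nil => exact absurd rfl h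
  | @cons a b c hab W ih =>
    by_cases hb : c.2.1 s = b.2.1 s
    · by_cases ha : s = a.1
      · exact ⟨a, W.support.mem_cons_self, ha.symm⟩
      · by_cases hb' : s = b.1
        · exact ⟨b, by simp, hb'.symm⟩
        · exact absurd (hb ▸ lamp_eq_of_adj hab ha hb') h
    · obtain ⟨z, hz, hzs⟩ := ih hb
      exact ⟨z, List.mem_cons_of_mem _ hz, hzs⟩

/-- A lamp on which `u` and `v` differ has to be visited on the way from `u` to `v`. -/
theorem abs_sub_add_abs_sub_le_lampDist {u v : LV} (huv : lampGraph.Reachable u v) {s : ℤ}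
    (h : v.2.1 s ≠ u.2.1 s) : |s - u.1| + |v.1 - s| ≤ lampDist u v := by
  classical
  obtain ⟨W, hW⟩ := huv.exists_walk_length_eq_dist
  obtain ⟨z, hz, rfl⟩ := exists_mem_support_fst_eq W h
  have hsplit := congrArg SimpleGraph.Walk.length (W.take_spec hz)
  rw [SimpleGraph.Walk.length_append] at hsplit
  have h₁ := abs_fst_sub_le_length (W.takeUntil z hz)
  have h₂ := abs_fst_sub_le_length (W.dropUntil z hz)
  rw [lampDist, ← hW, ← hsplit]
  push_cast
  linarith

theorem reachable_start (R : ℕ) :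
    lampGraph.Reachable lampBase (-(R : ℤ), lampIcc (-(R : ℤ)) 0) := by
  have adj {p q a a' : ℤ} (hq : q = p + 1 ∨ q = p - 1)
      (h : ∀ i ≠ p, (a' ≤ i ∧ i ≤ 0 ↔ a ≤ i ∧ i ≤ 0)) :
      lampGraph.Adj (p, lampIcc a 0) (q, lampIcc a' 0) :=
    Or.inl ⟨hq, fun i hi => by simp only [lampIcc_apply, if_congr (h i hi) rfl rfl]⟩
  have hleft (k : ℕ) : lampGraph.Reachable lampBase (-(k : ℤ), lampIcc (-k + 1) 0) := by
    induction k with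
    | zero =>
      have h0 : lampIcc (-((0 : ℕ) : ℤ) + 1) 0 = lampZero :=
        conf_ext fun i => by rw [lampIcc_apply, if_neg (by omega)]; rfl
      rw [h0]
      rfl
    | succ k ih => exact ih.trans (adj (by push_cast; omega) (by push_cast; omega)).reachable
  exact (hleft R).trans ((adj (a' := -R) (Or.inl rfl) (by omega)).reachable.trans
    (adj (q := -R) (by omega) (by omega)).reachable)

/-! ### Walks on `ℤ`: hitting times and last visits -/

def walkPos (r : ℤ) (d : ℕ → Bool) : ℕ → ℤ
  | 0 => r
  | t + 1 => walkPos r d t + if d t then 1 else -1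

theorem exists_le_walkPos_eq {r m : ℤ} {d : ℕ → Bool} (hr : r ≤ m) {t : ℕ}
    (ht : m ≤ walkPos r d t) : ∃ s ≤ t, walkPos r d s = m := by
  induction t with
  | zero => exact ⟨0, le_rfl, le_antisymm hr ht⟩
  | succ t ih =>
    by_cases h : m ≤ walkPos r d t
    · obtain ⟨s, hs, hsm⟩ := ih h
      exact ⟨s, by omega, hsm⟩
    · refine ⟨t + 1, le_rfl, ?_⟩
      simp only [walkPos] at ht ⊢
      split at ht <;> split <;> omega

/-- `0` if the walk never reaches `m`. -/
noncomputable def hitTime (r : ℤ) (d : ℕ → Bool) (m : ℤ) : ℕ :=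
  sInf {t | walkPos r d t = m}

def lastVisit (r : ℤ) (d : ℕ → Bool) (T : ℕ) (j : ℤ) : ℕ :=
  Nat.findGreatest (fun t => walkPos r d t = j) T

theorem walkPos_hitTime {r m : ℤ} {d : ℕ → Bool} (hr : r ≤ m) {t : ℕ}
    (ht : m ≤ walkPos r d t) : walkPos r d (hitTime r d m) = m ∧ hitTime r d m ≤ t := by
  obtain ⟨s, hst, hs⟩ := exists_le_walkPos_eq hr ht
  exact ⟨Nat.sInf_mem (s := {t | walkPos r d t = m}) ⟨s, hs⟩, (Nat.sInf_le hs).trans hst⟩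

theorem walkPos_lastVisit {r j : ℤ} {d : ℕ → Bool} {T : ℕ}
    (h : ∃ t < T, walkPos r d t = j) : walkPos r d (lastVisit r d T j) = j := by
  obtain ⟨t, htT, ht⟩ := h
  exact Nat.findGreatest_spec (P := fun t => walkPos r d t = j) htT.le ht

def VisitsBeforeHit (r m : ℤ) (J : Finset ℤ) (n : ℕ) (d : ℕ → Bool) : Prop :=
  hitTime r d m < n ∧ ∀ j ∈ J, ∃ t < hitTime r d m, walkPos r d t = j

/-- By `lampTraj_lamp_eq_lastVisit`, this says that all lamps of `J` are off when the walk first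
reaches `m`. -/
def ClearsBeforeHit (r m : ℤ) (J : Finset ℤ) (n : ℕ) (ω : ℕ → Bool × Bool) : Prop :=
  VisitsBeforeHit r m J n (fun t => (ω t).1) ∧
    ∀ j ∈ J, (ω (lastVisit r (fun t => (ω t).1) (hitTime r (fun t => (ω t).1) m) j)).2 = false

/-! ### Trajectories driven by coins -/

noncomputable def lampMove (x : LV) (c : Bool × Bool) : LV :=
  (if c.1 then x.1 + 1 else x.1 - 1, confSet x.2 x.1 c.2.toNat c.2.toNat_le)

def lampCode (x y : LV) : Bool × Bool :=
  (decide (y.1 = x.1 + 1), decide (y.2.1 x.1 = 1))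

theorem lampMove_lampCode {x y : LV} (h : lampStep x y) : lampMove x (lampCode x y) = y := by
  have hne : x.1 - 1 ≠ x.1 + 1 := by omega
  rcases h with _ | ⟨_, _ | ⟨_, _ | ⟨_, _ | ⟨_, ⟨⟩⟩⟩⟩⟩ <;>
    simp [lampMove, lampCode, confSet_apply_self, hne] <;> rfl

theorem lampGraph_adj_lampMove (x : LV) (c : Bool × Bool) : lampGraph.Adj x (lampMove x c) :=
  Or.inl ⟨by unfold lampMove; split <;> simp,
    fun _ hi => confSet_apply_of_ne _ _ (Bool.toNat_le _) hi⟩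

noncomputable def lampTraj (y : LV) (ω : ℕ → Bool × Bool) : ℕ → LV
  | 0 => y
  | t + 1 => lampMove (lampTraj y ω t) (ω t)

section Traj

variable {y : LV} {ω : ℕ → Bool × Bool}

theorem lampTraj_fst (t : ℕ) : (lampTraj y ω t).1 = walkPos y.1 (fun k => (ω k).1) t := by
  induction t with
  | zero => rfl
  | succ t ih =>
    simp only [lampTraj, lampMove, walkPos, ← ih]
    split <;> ring

theorem reachable_lampTraj (t : ℕ) : lampGraph.Reachable y (lampTraj y ω t) := by
  induction t with
  | zero => rfl
  | succ t ih => exact ih.trans (lampGraph_adj_lampMove _ _).reachable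

theorem lampTraj_succ_lamp_fst (t : ℕ) :
    (lampTraj y ω (t + 1)).2.1 (lampTraj y ω t).1 = (ω t).2.toNat :=
  confSet_apply_self _ _ _ (Bool.toNat_le _)

theorem lampTraj_lamp_eq_of_forall_ne {s : ℤ} {t T : ℕ} (htT : t ≤ T)
    (h : ∀ t', t ≤ t' → t' < T → (lampTraj y ω t').1 ≠ s) :
    (lampTraj y ω T).2.1 s = (lampTraj y ω t).2.1 s := by
  induction T, htT using Nat.le_induction with
  | base => rfl
  | succ T hT ih =>
    rw [← ih fun t' h₁ h₂ => h t' h₁ (by omega)]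
    exact confSet_apply_of_ne _ _ (Bool.toNat_le _) fun hs => h T hT (by omega) hs.symm

theorem exists_lt_lampTraj_fst_eq {s : ℤ} {T : ℕ} (h : (lampTraj y ω T).2.1 s ≠ y.2.1 s) :
    ∃ t < T, (lampTraj y ω t).1 = s := by
  by_contra! hs
  exact h (lampTraj_lamp_eq_of_forall_ne T.zero_le fun t' _ ht' => hs t' ht')

theorem lampTraj_lamp_eq_lastVisit {T : ℕ} {j : ℤ} (hT : (lampTraj y ω T).1 ≠ j)
    (hvisit : ∃ t < T, (lampTraj y ω t).1 = j) :
    (lampTraj y ω T).2.1 j = (ω (lastVisit y.1 (fun t => (ω t).1) T j)).2.toNat := by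
  simp only [lampTraj_fst] at hT hvisit
  set L := lastVisit y.1 (fun t => (ω t).1) T j
  have hLj : walkPos y.1 (fun t => (ω t).1) L = j := walkPos_lastVisit hvisit
  have hLT : L < T := (Nat.findGreatest_le T).lt_of_ne fun h => hT (h ▸ hLj)
  have hgap : ∀ t', L + 1 ≤ t' → t' < T → (lampTraj y ω t').1 ≠ j := fun t' h₁ h₂ => by
    rw [lampTraj_fst]
    exact Nat.findGreatest_is_greatest (show L < t' by omega) h₂.le
  rw [lampTraj_lamp_eq_of_forall_ne hLT hgap, ← lampTraj_succ_lamp_fst, lampTraj_fst, hLj]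

/-- At its first visit to `m` the walk is still in `B(x₀, κ)`, and a lit lamp at `j` would put it
at distance at least `m - 2j > κ` from `x₀`. -/
theorem clearsBeforeHit_of_lamp_ne (hy : lampGraph.Reachable lampBase y) {m i : ℤ} {κ : ℝ}
    {J : Finset ℤ} {τ n : ℕ} (hτn : τ ≤ n) (hym : y.1 ≤ m) (hmi : m ≤ i)
    (hi : (lampTraj y ω τ).2.1 i ≠ y.2.1 i)
    (hB : ∀ t < τ, (lampDist lampBase (lampTraj y ω t) : ℝ) ≤ κ)
    (hJ : ∀ j ∈ J, y.2.1 j ≠ 0 ∧ j < m ∧ κ < m - 2 * j) :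
    ClearsBeforeHit y.1 m J n ω := by
  obtain ⟨ti, hti, hpos⟩ := exists_lt_lampTraj_fst_eq hi
  rw [lampTraj_fst] at hpos
  obtain ⟨hTm, hT⟩ := walkPos_hitTime hym (hpos ▸ hmi)
  set T := hitTime y.1 (fun t => (ω t).1) m
  have hTpos : (lampTraj y ω T).1 = m := by rw [lampTraj_fst, hTm]
  have hoff : ∀ j ∈ J, (lampTraj y ω T).2.1 j = 0 := by
    intro j hj
    by_contra hlit
    have hdist : m - 2 * j ≤ (lampDist lampBase (lampTraj y ω T) : ℤ) := by
      have := abs_sub_add_abs_sub_le_lampDist (hy.trans (reachable_lampTraj T)) hlit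
      rw [hTpos, show lampBase.1 = 0 from rfl, sub_zero] at this
      linarith [neg_abs_le j, le_abs_self (m - j)]
    have : ((m - 2 * j : ℤ) : ℝ) ≤ κ :=
      (Int.cast_le.2 hdist).trans (by exact_mod_cast hB T (by omega))
    push_cast at this
    linarith [(hJ j hj).2.2]
  have hvisit : ∀ j ∈ J, ∃ t < T, (lampTraj y ω t).1 = j := fun j hj =>
    exists_lt_lampTraj_fst_eq (by rw [hoff j hj]; exact (hJ j hj).1.symm)
  refine ⟨⟨by omega, fun j hj => ?_⟩, fun j hj => ?_⟩
  · simpa only [lampTraj_fst] using hvisit j hj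
  · have h := lampTraj_lamp_eq_lastVisit (hTpos ▸ (hJ j hj).2.1.ne') (hvisit j hj)
    rwa [hoff j hj, eq_comm, Bool.toNat_eq_zero] at h

theorem clearsBeforeHit_of_lamp_lit {ρ : ℝ} (hρ : 0 < ρ) {R : ℕ} {i : ℤ} {τ n : ℕ}
    (hτn : τ ≤ n)
    (hB : ∀ t < τ, (lampDist lampBase (lampTraj (-R, lampIcc (-R) 0) ω t) : ℝ) ≤ 3 * ρ)
    (hρi : ρ ≤ i) (hi : (lampTraj (-R, lampIcc (-R) 0) ω τ).2.1 i ≠ 0) :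
    ClearsBeforeHit (-R) ⌈ρ⌉ (Icc (-(R : ℤ)) (-(⌊ρ⌋ + 1))) n ω := by
  have hceil : 0 < ⌈ρ⌉ := Int.ceil_pos.2 hρ
  have hfloor : 0 ≤ ⌊ρ⌋ := Int.floor_nonneg.2 hρ.le
  have hi0 : 0 < i := by exact_mod_cast hρ.trans_le hρi
  refine clearsBeforeHit_of_lamp_ne (reachable_start R) hτn (by show -(R : ℤ) ≤ _; omega)
    (Int.ceil_le.2 hρi) (by rwa [lampIcc_apply, if_neg (by omega)]) hB fun j hj => ?_
  obtain ⟨hRj, hjρ⟩ := mem_Icc.1 hj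
  have hρj : ρ < ((-j : ℤ) : ℝ) := Int.floor_lt.1 (by omega)
  push_cast at hρj
  refine ⟨by rw [lampIcc_apply, if_pos (by omega)]; simp, by omega, ?_⟩
  linarith [Int.le_ceil ρ]

end Traj

/-! ### Exit paths as coin sequences -/

noncomputable def pathCode (l : List LV) (t : ℕ) : Bool × Bool :=
  lampCode (l.getD t lampBase) (l.getD (t + 1) lampBase)

def ExitsAt (B S : Set LV) (y : LV) (ω : ℕ → Bool × Bool) (τ : ℕ) : Prop :=
  (∀ t < τ, lampTraj y ω t ∈ B) ∧ lampTraj y ω τ ∉ B ∧ lampTraj y ω τ ∈ S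

section Paths

variable {B S S' : Set LV} {y : LV} {ω : ℕ → Bool × Bool}

theorem ExitsAt.eq {τ τ' : ℕ} (h : ExitsAt B S y ω τ) (h' : ExitsAt B S' y ω τ') : τ = τ' := by
  by_contra hne
  rcases Nat.lt_or_gt_of_ne hne with hlt | hlt
  exacts [h.2.1 (h'.1 τ hlt), h'.2.1 (h.1 τ' hlt)]

theorem getElem_eq_lampTraj {l : List LV} (hy : l.head? = some y) (hl : l.IsChain lampStep)
    (hω : ∀ t < l.length - 1, ω t = pathCode l t) (t : ℕ) (ht : t < l.length) :
    l[t] = lampTraj y ω t := by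
  induction t with
  | zero =>
    rwa [List.head?_eq_getElem?, List.getElem?_eq_getElem ht, Option.some.injEq] at hy
  | succ t ih =>
    rw [lampTraj, ← ih (by omega), hω t (by omega), pathCode, List.getD_eq_getElem _ _ (by omega),
      List.getD_eq_getElem _ _ ht, lampMove_lampCode (List.isChain_iff_getElem.1 hl t ht)]

theorem length_pos_of_lampIsExitPath {l : List LV} (hl : lampIsExitPath B S y l) :
    0 < l.length :=
  List.length_pos_iff.2 fun h => by simp [h, lampIsExitPath] at hl

theorem exitsAt_of_lampIsExitPath {l : List LV} (hl : lampIsExitPath B S y l)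
    (hω : ∀ t < l.length - 1, ω t = pathCode l t) : ExitsAt B S y ω (l.length - 1) := by
  have hlen := length_pos_of_lampIsExitPath hl
  obtain ⟨hy, hchain, hB, z, hz, hzB, hzS⟩ := hl
  have htraj := getElem_eq_lampTraj hy hchain hω
  rw [List.getLast?_eq_getElem?, List.getElem?_eq_getElem (by omega), Option.some.injEq,
    htraj _ (by omega)] at hz
  refine ⟨fun t ht => ?_, hz ▸ hzB, hz ▸ hzS⟩
  rw [← htraj t (by omega), ← List.getElem_dropLast (by simpa using ht)]
  exact hB _ (List.getElem_mem _)

theorem eq_of_lampIsExitPath {l l' : List LV} (hl : lampIsExitPath B S y l)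
    (hl' : lampIsExitPath B S' y l') (hω : ∀ t < l.length - 1, ω t = pathCode l t)
    (hω' : ∀ t < l'.length - 1, ω t = pathCode l' t) : l = l' := by
  have hlen : l.length = l'.length := by
    have := (exitsAt_of_lampIsExitPath hl hω).eq (exitsAt_of_lampIsExitPath hl' hω')
    have := length_pos_of_lampIsExitPath hl
    have := length_pos_of_lampIsExitPath hl'
    omega
  refine List.ext_getElem hlen fun t ht ht' => ?_
  rw [getElem_eq_lampTraj hl.1 hl.2.1 hω, getElem_eq_lampTraj hl'.1 hl'.2.1 hω']

end Paths

/-! ### Counting coin sequences -/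

section Counting

open Fintype

variable {ι α : Type*} [Fintype ι] [DecidableEq ι] [Fintype α] [DecidableEq α]

theorem card_filter_forall_mem_eq (F : Finset ι) (g : ι → α) :
    #{ω : ι → α | ∀ i ∈ F, ω i = g i} = card α ^ (card ι - #F) := by
  have : ({ω | ∀ i ∈ F, ω i = g i} : Finset (ι → α)) =
      piFinset fun i => if i ∈ F then {g i} else univ := by
    ext ω
    simp only [mem_filter, mem_univ, true_and, mem_piFinset]
    refine forall_congr' fun i => ?_
    split_ifs <;> simp [*]
  rw [this, card_piFinset]
  simp only [apply_ite Finset.card, card_singleton, card_univ]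
  rw [prod_ite, prod_const_one, one_mul, prod_const, filter_not, filter_mem_eq_inter, univ_inter,
    card_sdiff_of_subset F.subset_univ, card_univ]

/-- `(card α)⁻¹ ^ #(F k)` is the uniform probability of the cylinder
`{ω | ∀ i ∈ F k, ω i = g k i}`. -/
theorem sum_inv_pow_card_le [Nonempty α] {κ : Type*} (s : Finset κ) (F : κ → Finset ι)
    (g : κ → ι → α) (P : (ι → α) → Prop) [DecidablePred P]
    (hP : ∀ k ∈ s, ∀ ω : ι → α, (∀ i ∈ F k, ω i = g k i) → P ω)
    (hdisj : ∀ k ∈ s, ∀ k' ∈ s, ∀ ω : ι → α,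
      (∀ i ∈ F k, ω i = g k i) → (∀ i ∈ F k', ω i = g k' i) → k = k') :
    ∑ k ∈ s, ((card α : ℝ)⁻¹) ^ #(F k) ≤ #{ω | P ω} / card α ^ card ι := by
  set C : κ → Finset (ι → α) := fun k => {ω | ∀ i ∈ F k, ω i = g k i}
  have hα : (card α : ℝ) ≠ 0 := by positivity
  have hC (k : κ) : ((card α : ℝ)⁻¹) ^ #(F k) = #(C k) / card α ^ card ι := by
    rw [card_filter_forall_mem_eq, Nat.cast_pow, pow_sub₀ _ hα (card_le_univ _), inv_pow,
      mul_div_right_comm, div_self (pow_ne_zero _ hα), one_mul]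
  have hCdisj : (s : Set κ).PairwiseDisjoint C := fun k hk k' hk' hne =>
    disjoint_left.2 fun ω h h' =>
      hne (hdisj k hk k' hk' ω (mem_filter.1 h).2 (mem_filter.1 h').2)
  calc ∑ k ∈ s, ((card α : ℝ)⁻¹) ^ #(F k) = #(s.biUnion C) / card α ^ card ι := by
        rw [sum_congr rfl fun k _ => hC k, ← sum_div, card_biUnion hCdisj, Nat.cast_sum]
    _ ≤ #{ω | P ω} / card α ^ card ι := by
        gcongr
        exact biUnion_subset.2 fun k hk ω h =>
          mem_filter.2 ⟨mem_univ _, hP k hk ω (mem_filter.1 h).2⟩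

theorem card_filter_coins_mul_two_pow_le {κ : Type*} (G : (ι → Bool) → Prop) [DecidablePred G]
    (f : (ι → Bool) → κ → ι) (J : Finset κ) (hf : ∀ d, G d → Set.InjOn (f d) J) :
    #{ω : ι → Bool × Bool | G (fun i => (ω i).1) ∧
        ∀ j ∈ J, (ω (f (fun i => (ω i).1) j)).2 = false} * 2 ^ #J ≤ 4 ^ card ι := by
  have hpairs : #{ω : ι → Bool × Bool | G (fun i => (ω i).1) ∧
        ∀ j ∈ J, (ω (f (fun i => (ω i).1) j)).2 = false} =
      ∑ d : ι → Bool, #{e : ι → Bool | G d ∧ ∀ j ∈ J, e (f d j) = false} := by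
    rw [card_equiv (Equiv.arrowProdEquivProdArrow ι (fun _ => Bool) (fun _ => Bool))
      (t := {p | G p.1 ∧ ∀ j ∈ J, p.2 (f p.1 j) = false}) fun ω => by simp,
      card_filter, Fintype.sum_prod_type]
    simp only [card_filter]
  have hfiber (d : ι → Bool) :
      #{e : ι → Bool | G d ∧ ∀ j ∈ J, e (f d j) = false} * 2 ^ #J ≤ 2 ^ card ι := by
    by_cases hd : G d
    · have hJ : #(J.image (f d)) = #J := card_image_of_injOn (hf d hd)
      rw [filter_congr (q := fun e => ∀ i ∈ J.image (f d), e i = false) (by simp [hd]),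
        card_filter_forall_mem_eq, Fintype.card_bool, ← hJ, ← pow_add,
        Nat.sub_add_cancel (card_le_univ _)]
    · simp [hd]
  calc _ = ∑ d : ι → Bool, #{e : ι → Bool | G d ∧ ∀ j ∈ J, e (f d j) = false} * 2 ^ #J := by
        rw [hpairs, sum_mul]
    _ ≤ ∑ _d : ι → Bool, 2 ^ card ι := sum_le_sum fun d _ => hfiber d
    _ = 4 ^ card ι := by
        rw [sum_const, card_univ, Fintype.card_fun, Fintype.card_bool, smul_eq_mul, ← mul_pow]
        norm_num

end Counting

open Classical in
theorem card_clearsBeforeHit_mul_le (r m : ℤ) (J : Finset ℤ) (N : ℕ) :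
    #{ω : Fin (N + 1) → Bool × Bool | ClearsBeforeHit r m J (N + 1) fun t => ω t} * 2 ^ #J ≤
      4 ^ (N + 1) := by
  have key := card_filter_coins_mul_two_pow_le
    (fun d : Fin (N + 1) → Bool => VisitsBeforeHit r m J (N + 1) fun t => d t)
    (fun d j => (lastVisit r (fun t => d t) (hitTime r (fun t => d t) m) j : Fin (N + 1))) J
    fun d ⟨hlt, hvisit⟩ j hj j' hj' heq => by
      have hlast {j} : lastVisit r (fun t => d t) (hitTime r (fun t => d t) m) j < N + 1 :=
        (Nat.findGreatest_le _).trans_lt hlt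
      have := congrArg Fin.val heq
      simp only [Fin.val_cast_of_lt hlast] at this
      rw [← walkPos_lastVisit (hvisit j hj), ← walkPos_lastVisit (hvisit j' hj'), this]
  rw [Fintype.card_fin] at key
  convert key using 3
  exact filter_congr fun _ _ => Iff.rfl

open Classical in
theorem card_clearsBeforeHit_le (r m : ℤ) (J : Finset ℤ) (N : ℕ) {δ : ℝ} (hδ : δ ≤ #J) :
    (#{ω : Fin (N + 1) → Bool × Bool | ClearsBeforeHit r m J (N + 1) fun t => ω t} : ℝ) ≤
      2 ^ (-δ) * 4 ^ (N + 1) :=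
  calc _ ≤ (4 : ℝ) ^ (N + 1) / 2 ^ #J := by
        rw [le_div_iff₀ (by positivity)]
        exact_mod_cast card_clearsBeforeHit_mul_le r m J N
    _ = 2 ^ (-(#J : ℝ)) * 4 ^ (N + 1) := by
        rw [Real.rpow_neg zero_le_two, Real.rpow_natCast, div_eq_inv_mul]
    _ ≤ 2 ^ (-δ) * 4 ^ (N + 1) := by gcongr; exact one_le_two

theorem sub_le_card_Icc_neg_floor (R : ℕ) (ρ : ℝ) :
    (R : ℝ) - ρ ≤ #(Icc (-(R : ℤ)) (-(⌊ρ⌋ + 1))) := by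
  have h : ((R - ⌊ρ⌋ : ℤ) : ℝ) ≤ ((#(Icc (-(R : ℤ)) (-(⌊ρ⌋ + 1))) : ℤ) : ℝ) := by
    rw [Int.card_Icc]
    exact Int.cast_le.2 ((le_of_eq (by ring)).trans (Int.self_le_toNat _))
  push_cast at h
  linarith [Int.floor_le ρ]

theorem lampExitProb_le {B S : Set LV} {y : LV} {c : ℝ}
    (P : (N : ℕ) → (Fin (N + 1) → Bool × Bool) → Prop) [∀ N, DecidablePred (P N)]
    (hP : ∀ N ω τ, τ ≤ N → ExitsAt B S y (fun t => ω t) τ → P N ω)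
    (hc : ∀ N, (#{ω | P N ω} : ℝ) ≤ c * 4 ^ (N + 1)) : lampExitProb B S y ≤ c := by
  refine Real.tsum_le_of_sum_le (fun l => by unfold lampTrajWeight; positivity) fun s => ?_
  set N := s.sup fun l => l.1.length
  have hlen : ∀ l ∈ s, l.1.length - 1 ≤ N := fun l hl =>
    (Nat.sub_le _ _).trans (le_sup (f := fun l => l.1.length) hl)
  set F : {l // lampIsExitPath B S y l} → Finset (Fin (N + 1)) :=
    fun l => {i | (i : ℕ) < l.1.length - 1}
  have hagree : ∀ l ∈ s, ∀ ω : Fin (N + 1) → Bool × Bool,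
      (∀ i ∈ F l, ω i = pathCode l.1 i) → ∀ t < l.1.length - 1, ω t = pathCode l.1 t := by
    intro l hl ω h t ht
    have hval : ((t : Fin (N + 1)) : ℕ) = t := Fin.val_cast_of_lt (by have := hlen l hl; omega)
    simpa [hval] using h t (by simp [F, hval, ht])
  calc ∑ l ∈ s, lampTrajWeight l.1
      = ∑ l ∈ s, ((Fintype.card (Bool × Bool) : ℝ)⁻¹) ^ #(F l) := by
        refine sum_congr rfl fun l hl => ?_
        rw [Fin.card_filter_val_lt, min_eq_right (by have := hlen l hl; omega)]
        simp [lampTrajWeight]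
    _ ≤ #{ω | P N ω} / Fintype.card (Bool × Bool) ^ Fintype.card (Fin (N + 1)) :=
        sum_inv_pow_card_le s F (fun l i => pathCode l.1 i) (P N)
          (fun l hl ω h => hP N ω _ (hlen l hl) (exitsAt_of_lampIsExitPath l.2 (hagree l hl ω h)))
          fun l hl l' hl' ω h h' => Subtype.ext <|
            eq_of_lampIsExitPath l.2 l'.2 (hagree l hl ω h) (hagree l' hl' ω h')
    _ ≤ c := by
        rw [div_le_iff₀ (by positivity)]
        simpa using hc N

end Lamplighter

open Lamplighter in
theorem lamplighter_exit_estimate_left_general (K : ℝ) (hK1 : 1 < K) (R : ℕ) (hR : 1 ≤ R) :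
    lampExitProb (lampRBall lampBase (K * R))
      {x : LV | ∃ i : ℤ, (1 - (3 - K) / 3) * R ≤ (i : ℝ) ∧ (i : ℝ) ≤ R ∧
        x.2.1 i ≠ 0}
      ((-(R : ℤ)), lampIcc (-(R : ℤ)) 0)
    ≤ (2 : ℝ) ^ (-((3 - K) / 3 * R)) := by
  classical
  set ρ : ℝ := (1 - (3 - K) / 3) * R with hρ
  have hρ0 : 0 < ρ := by
    have : (1 : ℝ) ≤ R := by exact_mod_cast hR
    nlinarith
  refine lampExitProb_le
    (fun N ω => ClearsBeforeHit (-R) ⌈ρ⌉ (Icc (-(R : ℤ)) (-(⌊ρ⌋ + 1))) (N + 1) fun t => ω t)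
    (fun N ω τ hτ ⟨hB, _, i, hρi, _, hi⟩ => clearsBeforeHit_of_lamp_lit hρ0 (by omega)
      (fun t ht => (hB t ht).trans_eq (by ring)) hρi hi)
    fun N => card_clearsBeforeHit_le _ _ _ N ?_
  linarith [sub_le_card_Icc_neg_floor R ρ]

/-- **Exit estimate from `y₁`.** Fix `1 < K < 3`, `δ = (3-K)/3`, `λ = 1-δ`.
Started from `y₁ = (-R, 1_{[-R,0]})`, the probability that the walk exits
`B(x₀,KR)` at a state whose set of lit lamps meets `[λR, R]` is at most
`2^{-δR}`: on this event the walk must exit through position `λR` before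
reaching `-3R`, and then every lamp in `[-R, -λR)` must have been switched
off. -/
theorem lamplighter_exit_estimate_left (K : ℝ) (hK1 : 1 < K) (hK3 : K < 3)
    (R : ℕ) (hR : 1 ≤ R) :
    lampExitProb (lampRBall lampBase (K * R))
      {x : LV | ∃ i : ℤ, (1 - (3 - K) / 3) * R ≤ (i : ℝ) ∧ (i : ℝ) ≤ R ∧
        x.2.1 i ≠ 0}
      ((-(R : ℤ)), lampIcc (-(R : ℤ)) 0)
    ≤ (2 : ℝ) ^ (-((3 - K) / 3 * R)) :=
  lamplighter_exit_estimate_left_general K hK1 R hR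
end
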